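/- In Z[x,y,z,k] localized at 2 (or over Q), the resultant Res_y(Res_z(F, F_z), Res_z(F_y, F_z)) of F(x,y,z) = x² + y² + z² + x²y²z² + k·x·y·z equals 2¹²·k⁸·x²⁶·(2x² - kx - 2)²·(2x² - kx + 2)²·(2x² + kx - 2)²·(2x² + kx + 2)². -/

import Mathlib

/-!
`Res_z(F, F_z) = P(y²)` is even in `y` and `Res_z(F_y, F_z) = y · Q(y²)` is odd (`P = resFFzT`,
`Q = resFFyT`, polynomials in `t = y²`). Splitting off the factor `y` costs the constant
coefficient `P(0) = 4x²`, and `Res(f(y^p), g(y^p)) = Res(f, g)^p`: ordering the rows and columns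
of the Sylvester matrix by their residue mod `p` makes it block diagonal, with `p` copies of the
Sylvester matrix of `f` and `g` on the diagonal. Hence the iterated resultant is
`4x² · Res(P, Q)²`, and `Res(P, Q)` is a `5 × 5` determinant, which factors as
`2⁵ k⁴ x¹² ((2x² - kx)² - 4) ((2x² + kx)² - 4)`.
-/

open Polynomial

/-- The Sylvester matrix of `f` and `g`, regarded as polynomials of degree
(at most) `m` and `n` respectively: the first `n` rows are the coefficient
vectors of `X^i * f` for `0 ≤ i < n` and the last `m` rows are the coefficient
vectors of `X^i * g` for `0 ≤ i < m`, all with respect to the monomial basis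
`1, X, …, X^(m+n-1)`. -/
def sylvester {R : Type*} [CommRing R] (f g : Polynomial R) (m n : ℕ) :
    Matrix (Fin (n + m)) (Fin (n + m)) R :=
  Matrix.of fun i j =>
    if (i : ℕ) < n then
      (if (i : ℕ) ≤ (j : ℕ) then f.coeff ((j : ℕ) - (i : ℕ)) else 0)
    else
      (if (i : ℕ) - n ≤ (j : ℕ) then g.coeff ((j : ℕ) - ((i : ℕ) - n)) else 0)

/-- The resultant of `f` and `g` (of degrees `m` and `n`), as the determinant
of their Sylvester matrix. -/
def resultant {R : Type*} [CommRing R] (f g : Polynomial R) (m n : ℕ) : R :=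
  (_root_.sylvester f g m n).det

noncomputable section

/-- The base ring `ℚ[x,k]`. -/
abbrev R2 : Type := MvPolynomial (Fin 2) ℚ

/-- The variable `x`. -/
def xv : R2 := MvPolynomial.X 0

/-- The variable `k`. -/
def kv : R2 := MvPolynomial.X 1

/-- `F = x² + y² + z² + x²y²z² + kxyz` as a polynomial in `z` (outer variable)
with coefficients polynomials in `y` (inner variable) over `ℚ[x,k]`:
`F = (1 + x²y²) z² + (kxy) z + (x² + y²)`. -/
def FF : Polynomial (Polynomial R2) :=
  C (1 + C (xv ^ 2) * X ^ 2) * X ^ 2 + C (C (kv * xv) * X) * X +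
    C (C (xv ^ 2) + X ^ 2)

/-- `F_z = 2(1 + x²y²) z + kxy`. -/
def FFz : Polynomial (Polynomial R2) :=
  C (2 * (1 + C (xv ^ 2) * X ^ 2)) * X + C (C (kv * xv) * X)

/-- `F_y = (2x²y) z² + (kx) z + 2y`. -/
def FFy : Polynomial (Polynomial R2) :=
  C (C (2 * xv ^ 2) * X) * X ^ 2 + C (C (kv * xv)) * X + C (2 * X)

section

variable {R : Type*} [CommRing R]

theorem sylvester_apply (f g : R[X]) (m n : ℕ) (i j : Fin (n + m)) :
    _root_.sylvester f g m n i j =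
      if (i : ℕ) < n then (X ^ (i : ℕ) * f).coeff j else (X ^ ((i : ℕ) - n) * g).coeff j := by
  simp only [_root_.sylvester, Matrix.of_apply, coeff_X_pow_mul']

theorem resultant_two_one (f g : R[X]) :
    _root_.resultant f g 2 1 = f.coeff 0 * (g.coeff 1 ^ 2 - g.coeff 0 * g.coeff 2)
      - f.coeff 1 * g.coeff 0 * g.coeff 1 + f.coeff 2 * g.coeff 0 ^ 2 := by
  rw [_root_.resultant, Matrix.det_fin_three]
  simp only [_root_.sylvester, Matrix.of_apply, Fin.isValue, Fin.val_zero, Fin.val_one, Fin.val_two,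
    Nat.reduceLeDiff, Nat.reduceSub, Nat.reduceLT, zero_le, ↓reduceIte, Nat.lt_irrefl, mul_zero,
    add_zero, sub_zero, Nat.sub_self]
  ring

theorem sylvester_X_mul_right_reindex_submatrix_succ (f h : R[X]) (m n : ℕ) :
    (Matrix.reindex (finCongr (Nat.add_right_comm n 1 m)) (finCongr (Nat.add_right_comm n 1 m))
      (_root_.sylvester f (X * h) m (n + 1))).submatrix Fin.succ Fin.succ =
      _root_.sylvester f h m n := by
  ext i j
  simp only [Matrix.reindex_apply, Matrix.submatrix_apply, finCongr_symm, finCongr_apply,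
    sylvester_apply, Fin.val_cast, Fin.val_succ, Nat.add_lt_add_iff_right,
    Nat.add_sub_add_right, pow_succ', mul_assoc, mul_left_comm _ X, coeff_X_mul]

theorem resultant_X_mul_right (f h : R[X]) (m n : ℕ) :
    _root_.resultant f (X * h) m (n + 1) = f.coeff 0 * _root_.resultant f h m n := by
  rw [_root_.resultant, ← Matrix.det_reindex_self (finCongr (Nat.add_right_comm n 1 m)),
    Matrix.det_succ_column_zero, Fin.sum_univ_succ, Fin.succAbove_zero,
    sylvester_X_mul_right_reindex_submatrix_succ, Finset.sum_eq_zero]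
  · simp [_root_.sylvester, _root_.resultant]
  · intro i _
    simp [_root_.sylvester]

theorem coeff_X_pow_mul_expand (f : R[X]) {p r s : ℕ} (hr : r < p) (hs : s < p) (a b : ℕ) :
    (X ^ (r + p * a) * expand R p f).coeff (s + p * b) =
      if r = s then (X ^ a * f).coeff b else 0 := by
  have hp : 0 < p := by omega
  have hXpa : (X ^ (p * a) : R[X]) = expand R p (X ^ a) := by rw [map_pow, expand_X, pow_mul]
  rw [pow_add, mul_assoc, hXpa, ← map_mul]
  split_ifs with hrs
  · rw [hrs, add_comm, coeff_X_pow_mul, coeff_expand_mul' hp]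
  · rw [coeff_X_pow_mul', coeff_expand hp]
    split_ifs with hle hdvd <;> try rfl
    obtain ⟨c, hc⟩ := hdvd
    have := congrArg (· % p) (Nat.sub_add_cancel hle)
    simp only [hc, Nat.add_mul_mod_self_left, Nat.mul_add_mod, Nat.mod_eq_of_lt hr,
      Nat.mod_eq_of_lt hs] at this
    exact (hrs this).elim

-- `(a, r) ↦ r + p * a`
def sylvesterExpandEquiv (p m n : ℕ) : Fin (n + m) × Fin p ≃ Fin (p * n + p * m) :=
  finProdFinEquiv.trans (finCongr (by ring))

theorem sylvester_expand_submatrix (f g : R[X]) (p m n : ℕ) :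
    (_root_.sylvester (expand R p f) (expand R p g) (p * m) (p * n)).submatrix
        (sylvesterExpandEquiv p m n) (sylvesterExpandEquiv p m n) =
      Matrix.blockDiagonal fun _ : Fin p => _root_.sylvester f g m n := by
  ext ⟨a, r⟩ ⟨b, s⟩
  simp only [sylvesterExpandEquiv, Matrix.submatrix_apply, Equiv.trans_apply, finCongr_apply,
    sylvester_apply, Matrix.blockDiagonal_apply', Fin.val_cast, finProdFinEquiv_apply_val,
    Fin.ext_iff]
  by_cases ha : (a : ℕ) < n
  · have hlt : (r : ℕ) + p * a < p * n := by nlinarith [r.2]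
    rw [if_pos hlt, if_pos ha, coeff_X_pow_mul_expand f r.2 s.2]
  · have hge : ¬ (r : ℕ) + p * a < p * n := by nlinarith
    have hsub : (r : ℕ) + p * a - p * n = r + p * (a - n) := by
      have := Nat.mul_le_mul_left p (not_lt.mp ha)
      rw [Nat.mul_sub]
      omega
    rw [if_neg hge, if_neg ha, hsub, coeff_X_pow_mul_expand g r.2 s.2]

theorem resultant_expand (f g : R[X]) (p m n : ℕ) :
    _root_.resultant (expand R p f) (expand R p g) (p * m) (p * n) =
      _root_.resultant f g m n ^ p := by
  rw [_root_.resultant, ← Matrix.det_submatrix_equiv_self (sylvesterExpandEquiv p m n),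
    sylvester_expand_submatrix, Matrix.det_blockDiagonal, Finset.prod_const, Finset.card_univ,
    Fintype.card_fin, _root_.resultant]

end

def resFFzT : R2[X] :=
  C (4 * xv ^ 4) * X ^ 3 + C (8 * xv ^ 2 - kv ^ 2 * xv ^ 4 + 4 * xv ^ 6) * X ^ 2 +
    C (4 - kv ^ 2 * xv ^ 2 + 8 * xv ^ 4) * X + C (4 * xv ^ 2)

def resFFyT : R2[X] :=
  C (8 * xv ^ 4) * X ^ 2 + C (16 * xv ^ 2) * X + C (8 - 2 * kv ^ 2 * xv ^ 2)

theorem resultant_FF_FFz : _root_.resultant FF FFz 2 1 = expand R2 2 resFFzT := by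
  simp only [resultant_two_one, FF, FFz, coeff_add, coeff_C_mul, coeff_X_pow, coeff_X, coeff_C,
    coeff_mul_X]
  norm_num
  simp only [resFFzT, map_add, map_sub, map_mul, map_pow, map_ofNat, expand_C, expand_X]
  ring

theorem resultant_FFy_FFz : _root_.resultant FFy FFz 2 1 = X * expand R2 2 resFFyT := by
  simp only [resultant_two_one, FFy, FFz, coeff_add, coeff_C_mul, coeff_X_pow, coeff_X, coeff_C,
    coeff_mul_X]
  norm_num
  simp only [resFFyT, map_add, map_sub, map_mul, map_pow, map_ofNat, expand_C, expand_X]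
  ring

theorem coeff_zero_resFFzT : resFFzT.coeff 0 = 4 * xv ^ 2 := by
  simp [coeff_zero_eq_eval_zero, resFFzT]

theorem resultant_resFFzT_resFFyT : _root_.resultant resFFzT resFFyT 3 2 =
    2 ^ 5 * kv ^ 4 * xv ^ 12 * ((2 * xv ^ 2 - kv * xv) ^ 2 - 4) *
      ((2 * xv ^ 2 + kv * xv) ^ 2 - 4) := by
  simp only [_root_.resultant, _root_.sylvester, Matrix.det_succ_row_zero, Fin.sum_univ_succ,
    Fin.succAbove, Matrix.det_unique, Matrix.of_apply, Matrix.submatrix_apply, Finset.univ_unique,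
    Finset.sum_singleton, Fin.isValue, Fin.val_succ, Fin.val_eq_zero, Fin.castSucc_zero,
    Fin.castSucc_one, Fin.castSucc_succ, Fin.succ_zero_eq_one, Fin.succ_one_eq_two, Fin.succ_pos,
    Fin.reduceSucc, Fin.reduceCastSucc, Fin.reduceLT, Fin.default_eq_zero, Fin.coe_ofNat_eq_mod,
    Nat.reduceAdd, Nat.reduceMod, Nat.reduceSub, Nat.reduceLeDiff, ↓reduceIte]
  norm_num
  simp only [resFFzT, resFFyT, coeff_add, coeff_C_mul, coeff_X_pow, coeff_X, coeff_C]
  norm_num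
  ring

/-- `Res_y(Res_z(F, F_z), Res_z(F_y, F_z))
  = 2¹² k⁸ x²⁶ (2x² - kx - 2)² (2x² - kx + 2)² (2x² + kx - 2)² (2x² + kx + 2)²`. -/
theorem stmt_17 :
    _root_.resultant (_root_.resultant FF FFz 2 1) (_root_.resultant FFy FFz 2 1) 6 5 =
      2 ^ 12 * kv ^ 8 * xv ^ 26 * (2 * xv ^ 2 - kv * xv - 2) ^ 2 *
        (2 * xv ^ 2 - kv * xv + 2) ^ 2 * (2 * xv ^ 2 + kv * xv - 2) ^ 2 *
        (2 * xv ^ 2 + kv * xv + 2) ^ 2 := by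
  rw [resultant_FF_FFz, resultant_FFy_FFz, resultant_X_mul_right (n := 4),
    resultant_expand (p := 2) (m := 3) (n := 2), resultant_resFFzT_resFFyT, coeff_expand two_pos]
  simp only [dvd_zero, if_true, Nat.zero_div, coeff_zero_resFFzT]
  ring

end
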